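/- arXiv:2102.03486 — 5 statements merged into one kernel-verified Lean document; each statement's English description precedes it below -/
import Mathlib

section
/- For all positive integers n and k, the sum of parts divisible by k counted without multiplicity over all b-colored partitions of n satisfies H_k(n) = Σ_{j=1}^{⌊n/k⌋} j · b · k · h(n − jk). -/
/-- A colored partition of `n`, where the part `j` comes in `b j` colors, is a multiset of
pairs `(j, c)` with `j` a positive integer and `c ∈ {1, …, b j}`, whose weight (the sum of
the first coordinates, counted with multiplicity) is `n`. -/
def IsColoredPartition (b : ℕ → ℕ) (n : ℕ) (M : Multiset (ℕ × ℕ)) : Prop :=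
  (∀ p ∈ M, 0 < p.1 ∧ 1 ≤ p.2 ∧ p.2 ≤ b p.1) ∧ (M.map Prod.fst).sum = n

/-- `h n`: the number of colored partitions of `n` (so `h 0 = 1`). -/
noncomputable def coloredh (b : ℕ → ℕ) (n : ℕ) : ℕ := Nat.card {M // IsColoredPartition b n M}

/-- `H k n`: the sum, over all colored partitions of `n`, of the sum of `j` over the
distinct colored parts `(j, c)` occurring in the partition (each counted once, without
multiplicity) such that `k` divides `j`. -/
noncomputable def coloredH (b : ℕ → ℕ) (k n : ℕ) : ℕ :=
  ∑ᶠ M ∈ {M | IsColoredPartition b n M},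
    ∑ p ∈ M.toFinset.filter (fun p => k ∣ p.1), p.1

open Finset

lemma CP.card_le_sum (M : Multiset ℕ) (h : ∀ x ∈ M, 1 ≤ x) : Multiset.card M ≤ M.sum := by
  induction M using Multiset.induction with
  | empty => simp
  | cons a s ih =>
    simp only [Multiset.card_cons, Multiset.sum_cons]
    have ha := h a (Multiset.mem_cons_self a s)
    have := ih (fun x hx => h x (Multiset.mem_cons_of_mem hx))
    omega

lemma CP.mem_F {b n : ℕ} {M : Multiset (ℕ × ℕ)} (hM : IsColoredPartition (fun _ => b) n M)
    {p : ℕ × ℕ} (hp : p ∈ M) : p ∈ Finset.Icc 1 n ×ˢ Finset.Icc 1 b := by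
  obtain ⟨h1, h2⟩ := hM
  obtain ⟨hp1, hp2, hp3⟩ := h1 p hp
  have hle : p.1 ≤ n := by
    rw [← h2]
    exact Multiset.single_le_sum (fun x _ => Nat.zero_le x) _
      (Multiset.mem_map_of_mem _ hp)
  simp only [Finset.mem_product, Finset.mem_Icc]
  exact ⟨⟨hp1, hle⟩, hp2, hp3⟩

lemma CP.card_le {b n : ℕ} {M : Multiset (ℕ × ℕ)} (hM : IsColoredPartition (fun _ => b) n M) :
    Multiset.card M ≤ n := by
  have : Multiset.card (M.map Prod.fst) ≤ (M.map Prod.fst).sum := by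
    apply CP.card_le_sum
    intro x hx
    obtain ⟨p, hp, rfl⟩ := Multiset.mem_map.1 hx
    exact (hM.1 p hp).1
  simpa [hM.2] using this

lemma CP.finite (b n : ℕ) : {M | IsColoredPartition (fun _ => b) n M}.Finite := by
  set S : Multiset (ℕ × ℕ) := n • (Finset.Icc 1 n ×ˢ Finset.Icc 1 b).val with hS
  apply Set.Finite.subset (Set.finite_coe_iff.mp ?_) (s := {M | M ≤ S})
  · intro M hM
    simp only [Set.mem_setOf_eq] at hM ⊢
    rw [Multiset.le_iff_count]
    intro a
    by_cases ha : a ∈ M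
    · have h1 : M.count a ≤ Multiset.card M := Multiset.count_le_card a M
      have h2 : Multiset.card M ≤ n := CP.card_le hM
      have h3 : a ∈ (Finset.Icc 1 n ×ˢ Finset.Icc 1 b).val := CP.mem_F hM ha
      have hc1 : Multiset.count a (Finset.Icc 1 n ×ˢ Finset.Icc 1 b).val = 1 :=
        Multiset.count_eq_one_of_mem (Finset.Icc 1 n ×ˢ Finset.Icc 1 b).nodup h3
      rw [hS, Multiset.count_nsmul, hc1]
      omega
    · simp [Multiset.count_eq_zero_of_notMem ha]
  · have : {M | M ≤ S} = ↑(S.powerset.toFinset) := by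
      ext M
      simp [Multiset.mem_powerset]
    rw [Set.finite_coe_iff, this]
    exact (S.powerset.toFinset).finite_toSet

lemma CP.card_contains (b n : ℕ) (p : ℕ × ℕ) (hp1 : 0 < p.1) (hpn : p.1 ≤ n)
    (hc1 : 1 ≤ p.2) (hc2 : p.2 ≤ b) :
    Nat.card {M // IsColoredPartition (fun _ => b) n M ∧ p ∈ M}
      = coloredh (fun _ => b) (n - p.1) := by
  apply Nat.card_congr
  refine ⟨fun ⟨M, hM, hpM⟩ => ⟨M.erase p, ?_, ?_⟩,
    fun ⟨N, hN⟩ => ⟨p ::ₘ N, ⟨?_, ?_⟩, Multiset.mem_cons_self p N⟩, ?_, ?_⟩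
  · exact fun q hq => hM.1 q (Multiset.mem_of_mem_erase hq)
  · have hM2 := hM.2
    have hcons : p ::ₘ M.erase p = M := Multiset.cons_erase hpM
    have : ((p ::ₘ M.erase p).map Prod.fst).sum = n := by rw [hcons, hM2]
    simp only [Multiset.map_cons, Multiset.sum_cons] at this
    omega
  · intro q hq
    rcases Multiset.mem_cons.1 hq with h | h
    · subst h; exact ⟨hp1, hc1, hc2⟩
    · exact hN.1 q h
  · have := hN.2
    simp only [Multiset.map_cons, Multiset.sum_cons, this]
    omega
  · rintro ⟨M, hM, hpM⟩
    simp [Multiset.cons_erase hpM]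
  · rintro ⟨N, hN⟩
    simp [Multiset.erase_cons_head]

/-- For `b`-colored partitions, `H_k(n) = Σ_{j=1}^{⌊n/k⌋} j · b · k · h(n - jk)`. -/
theorem coloredH_eq_sum (b : ℕ) (hb : 0 < b) (n k : ℕ) (hn : 0 < n) (hk : 0 < k) :
    coloredH (fun _ => b) k n
      = ∑ j ∈ Finset.Icc 1 (n / k), j * b * k * coloredh (fun _ => b) (n - j * k) := by
  classical
  have hfin := CP.finite b n
  set T : Finset (Multiset (ℕ × ℕ)) := hfin.toFinset with hT
  set P : Finset (ℕ × ℕ) := (Finset.Icc 1 n ×ˢ Finset.Icc 1 b).filter (fun p => k ∣ p.1)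
    with hP
  have h1 : coloredH (fun _ => b) k n
      = ∑ M ∈ T, ∑ p ∈ M.toFinset.filter (fun p => k ∣ p.1), p.1 := by
    rw [coloredH, ← hfin.coe_toFinset, finsum_mem_coe_finset]
  rw [h1]
  have h2 : ∀ M ∈ T, ∑ p ∈ M.toFinset.filter (fun p => k ∣ p.1), p.1
      = ∑ p ∈ P, if p ∈ M then p.1 else 0 := by
    intro M hM
    rw [hT, Set.Finite.mem_toFinset] at hM
    have hPM : P.filter (fun p => p ∈ M) = M.toFinset.filter (fun p => k ∣ p.1) := by
      ext p
      simp only [hP, Finset.mem_filter, Multiset.mem_toFinset]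
      constructor
      · rintro ⟨⟨_, hd⟩, hm⟩; exact ⟨hm, hd⟩
      · rintro ⟨hm, hd⟩; exact ⟨⟨CP.mem_F hM hm, hd⟩, hm⟩
    rw [← hPM, Finset.sum_filter]
  rw [Finset.sum_congr rfl h2, Finset.sum_comm]
  have h3 : ∀ p ∈ P, ∑ M ∈ T, (if p ∈ M then p.1 else 0)
      = p.1 * coloredh (fun _ => b) (n - p.1) := by
    intro p hp
    have hpF : p.1 ∈ Finset.Icc 1 n ∧ p.2 ∈ Finset.Icc 1 b ∧ k ∣ p.1 := by
      simp only [hP, Finset.mem_filter, Finset.mem_product] at hp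
      exact ⟨hp.1.1, hp.1.2, hp.2⟩
    obtain ⟨hj, hc, hd⟩ := hpF
    rw [Finset.mem_Icc] at hj hc
    have hcount : ∑ M ∈ T, (if p ∈ M then p.1 else 0)
        = (T.filter (fun M => p ∈ M)).card * p.1 := by
      rw [← Finset.sum_filter, Finset.sum_const, smul_eq_mul]
    rw [hcount]
    have hfin2 : {M | IsColoredPartition (fun _ => b) n M ∧ p ∈ M}.Finite :=
      hfin.subset (fun M hM => hM.1)
    have hT2 : hfin2.toFinset = T.filter (fun M => p ∈ M) := by
      ext M
      simp [hT, Set.Finite.mem_toFinset]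
    have hcard : (T.filter (fun M => p ∈ M)).card
        = Nat.card {M // IsColoredPartition (fun _ => b) n M ∧ p ∈ M} := by
      rw [← hT2]
      rw [show {M // IsColoredPartition (fun _ => b) n M ∧ p ∈ M}
        = ↥{M | IsColoredPartition (fun _ => b) n M ∧ p ∈ M} from rfl,
        Nat.card_coe_set_eq, Set.ncard_eq_toFinset_card _ hfin2]
    rw [hcard, CP.card_contains b n p hj.1 hj.2 hc.1 hc.2, mul_comm]
  rw [Finset.sum_congr rfl h3]
  have h5 : ∑ p ∈ P, p.1 * coloredh (fun _ => b) (n - p.1)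
      = ∑ j ∈ (Finset.Icc 1 n).filter (fun j => k ∣ j),
          b * (j * coloredh (fun _ => b) (n - j)) := by
    rw [hP, Finset.sum_filter, Finset.sum_product, Finset.sum_filter]
    refine Finset.sum_congr rfl fun j _ => ?_
    simp [Finset.sum_const, Nat.card_Icc, mul_ite]
  rw [h5]
  refine Finset.sum_nbij' (fun j => j / k) (fun m => m * k) ?_ ?_ ?_ ?_ ?_
  · intro a ha
    simp only [Finset.mem_filter, Finset.mem_Icc] at ha
    obtain ⟨⟨h1a, h2a⟩, hda⟩ := ha
    simp only [Finset.mem_Icc]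
    exact ⟨Nat.one_le_div_iff hk |>.2 (Nat.le_of_dvd h1a hda), Nat.div_le_div_right h2a⟩
  · intro m hm
    simp only [Finset.mem_Icc] at hm
    simp only [Finset.mem_filter, Finset.mem_Icc]
    exact ⟨⟨Nat.mul_pos hm.1 hk, (Nat.le_div_iff_mul_le hk).1 hm.2⟩, dvd_mul_left k m⟩
  · intro a ha
    simp only [Finset.mem_filter] at ha
    exact Nat.div_mul_cancel ha.2
  · intro m _
    exact Nat.mul_div_cancel m hk
  · intro a ha
    simp only [Finset.mem_filter] at ha
    have h6 : a / k * k = a := Nat.div_mul_cancel ha.2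
    have h7 : a / k * b * k * coloredh (fun _ => b) (n - a / k * k)
        = b * (a / k * k * coloredh (fun _ => b) (n - a / k * k)) := by ring
    rw [h7, h6]
end

section
/- For positive integers n and k: if k is odd then F°_k(n) = b · Σ_{j=1}^{⌊n/k⌋} h°(n − jk), and if k is even then F°_k(n) = 0. -/
/-- A colored partition in which every part has odd first coordinate. -/
def IsColoredOddPartition (b : ℕ → ℕ) (n : ℕ) (M : Multiset (ℕ × ℕ)) : Prop :=
  IsColoredPartition b n M ∧ ∀ p ∈ M, Odd p.1

/-- `h° n`: the number of `b`-colored partitions of `n` with all parts odd. -/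
noncomputable def coloredhOdd (b : ℕ → ℕ) (n : ℕ) : ℕ :=
  Nat.card {M // IsColoredOddPartition b n M}

/-- `F° k n`: the total number of parts with first coordinate `k`, counted with
multiplicity, over all `b`-colored odd partitions of `n`. -/
noncomputable def coloredFOdd (b : ℕ → ℕ) (k n : ℕ) : ℕ :=
  ∑ᶠ M ∈ {M | IsColoredOddPartition b n M}, (Multiset.filter (fun p => p.1 = k) M).card

/-!
Sort the parts with first coordinate `k` by their color `c`. The multiplicity `m` of `(k, c)` in
a partition equals `#{j ≥ 1 | j ≤ m}`, and for odd `k` the odd partitions of `n` containing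
`(k, c)` at least `j` times correspond, by removing `j` copies, to all odd partitions of `n - j k`.
Summing over `j` and over the `b` colors gives the formula; for even `k` there are no such parts.
-/

open Finset

theorem Finset.sum_eq_sum_Icc_card_filter_le {ι : Type*} (s : Finset ι) (f : ι → ℕ) {N : ℕ}
    (hf : ∀ i ∈ s, f i ≤ N) : ∑ i ∈ s, f i = ∑ j ∈ Icc 1 N, #{i ∈ s | j ≤ f i} := by
  calc ∑ i ∈ s, f i = ∑ i ∈ s, #{j ∈ Icc 1 N | j ≤ f i} := by
        refine sum_congr rfl fun i hi => ?_
        have hIcc : {j ∈ Icc 1 N | j ≤ f i} = Icc 1 (f i) := by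
          ext j
          simp only [Finset.mem_filter, Finset.mem_Icc]
          have := hf i hi
          omega
        simp [hIcc]
    _ = ∑ j ∈ Icc 1 N, #{i ∈ s | j ≤ f i} := by
        simp only [Finset.card_filter]
        exact Finset.sum_comm

theorem Multiset.finite_setOf_forall_mem_card_le {α : Type*} (s : Finset α) (n : ℕ) :
    {M : Multiset α | (∀ x ∈ M, x ∈ s) ∧ Multiset.card M ≤ n}.Finite := by
  classical
  refine (n • s.val).powerset.finite_toSet.subset fun M ⟨hMs, hMn⟩ =>
    Multiset.mem_powerset.2 <| Multiset.le_iff_count.2 fun x => ?_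
  by_cases hx : x ∈ M
  · rw [Multiset.count_nsmul, Multiset.count_eq_one_of_mem s.nodup (hMs x hx), mul_one]
    exact (Multiset.count_le_card x M).trans hMn
  · simp [Multiset.count_eq_zero_of_notMem hx]

theorem Multiset.card_filter_fst_eq_sum_count {α β : Type*} [DecidableEq α] [DecidableEq β]
    (M : Multiset (α × β)) (a : α) (t : Finset β) (ht : ∀ p ∈ M, p.1 = a → p.2 ∈ t) :
    Multiset.card (M.filter (·.1 = a)) = ∑ c ∈ t, Multiset.count (a, c) M := by
  have hsupp : ∀ p ∈ M.filter (·.1 = a), p ∈ t.map (Function.Embedding.sectR a β) := by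
    intro p hp
    obtain ⟨hpM, rfl⟩ := Multiset.mem_filter.1 hp
    exact Finset.mem_map.2 ⟨p.2, ht p hpM rfl, rfl⟩
  rw [← Multiset.sum_count_eq_card hsupp, Finset.sum_map]
  exact sum_congr rfl fun c _ => Multiset.count_filter_of_pos rfl

namespace IsColoredPartition

variable {b : ℕ → ℕ} {n : ℕ} {M : Multiset (ℕ × ℕ)}

theorem card_le (hM : IsColoredPartition b n M) : Multiset.card M ≤ n := by
  have := Multiset.card_nsmul_le_sum (s := M.map Prod.fst) (a := 1) fun x hx => by
    obtain ⟨p, hp, rfl⟩ := Multiset.mem_map.1 hx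
    exact (hM.1 p hp).1
  simpa [hM.2] using this

theorem count_mul_le (hM : IsColoredPartition b n M) (p : ℕ × ℕ) :
    Multiset.count p M * p.1 ≤ n := by
  obtain ⟨u, hu⟩ := Multiset.le_iff_exists_add.1 (Multiset.le_count_iff_replicate_le.1
    (le_refl (Multiset.count p M)))
  have hsum := congrArg (fun s => (s.map Prod.fst).sum) hu
  simp only [Multiset.map_add, Multiset.sum_add, Multiset.map_replicate, Multiset.sum_replicate,
    smul_eq_mul, hM.2] at hsum
  omega

end IsColoredPartition

theorem finite_setOf_isColoredPartition (b : ℕ → ℕ) (n : ℕ) :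
    {M | IsColoredPartition b n M}.Finite := by
  let parts := ((Finset.range (n + 1)).sigma fun j => Icc 1 (b j)).image fun p => (p.1, p.2)
  refine (Multiset.finite_setOf_forall_mem_card_le parts n).subset
    fun M hM => ⟨fun p hp => ?_, hM.card_le⟩
  have hp1 : p.1 ≤ n := hM.2 ▸ Multiset.le_sum_of_mem (Multiset.mem_map_of_mem Prod.fst hp)
  have hpc := (hM.1 p hp).2
  simp only [parts, Finset.mem_image, Finset.mem_sigma, Finset.mem_range, Finset.mem_Icc]
  exact ⟨⟨p.1, p.2⟩, ⟨Nat.lt_succ_of_le hp1, hpc⟩, rfl⟩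

theorem finite_setOf_isColoredOddPartition (b : ℕ → ℕ) (n : ℕ) :
    {M | IsColoredOddPartition b n M}.Finite :=
  (finite_setOf_isColoredPartition b n).subset fun _ hM => hM.1

section AddParts

variable {b : ℕ → ℕ} {k c : ℕ}

theorem isColoredOddPartition_add_replicate_iff (hk : Odd k) (hc : c ∈ Icc 1 (b k))
    (m j : ℕ) (M : Multiset (ℕ × ℕ)) :
    IsColoredOddPartition b (m + j * k) (M + Multiset.replicate j (k, c)) ↔
      IsColoredOddPartition b m M := by
  rw [Finset.mem_Icc] at hc
  have hpart : ∀ p ∈ Multiset.replicate j (k, c),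
      (0 < p.1 ∧ 1 ≤ p.2 ∧ p.2 ≤ b p.1) ∧ Odd p.1 := by
    intro p hp
    rw [Multiset.eq_of_mem_replicate hp]
    exact ⟨⟨hk.pos, hc⟩, hk⟩
  simp only [IsColoredOddPartition, IsColoredPartition, Multiset.mem_add, Multiset.map_add,
    Multiset.sum_add, Multiset.map_replicate, Multiset.sum_replicate, smul_eq_mul,
    Nat.add_right_cancel_iff]
  grind

def addReplicateEquiv (hk : Odd k) (hc : c ∈ Icc 1 (b k)) (m j : ℕ) :
    {M // IsColoredOddPartition b m M} ≃
      {M // IsColoredOddPartition b (m + j * k) M ∧ j ≤ Multiset.count (k, c) M} where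
  toFun M := ⟨M + Multiset.replicate j (k, c),
    (isColoredOddPartition_add_replicate_iff hk hc m j M).2 M.2, by simp⟩
  invFun M := ⟨M - Multiset.replicate j (k, c), by
    rw [← isColoredOddPartition_add_replicate_iff hk hc m j,
      tsub_add_cancel_of_le (Multiset.le_count_iff_replicate_le.1 M.2.2)]
    exact M.2.1⟩
  left_inv M := Subtype.ext (add_tsub_cancel_right _ _)
  right_inv M :=
    Subtype.ext (tsub_add_cancel_of_le (Multiset.le_count_iff_replicate_le.1 M.2.2))

theorem natCard_isColoredOddPartition_le_count (hk : Odd k) (hc : c ∈ Icc 1 (b k))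
    {n j : ℕ} (hj : j * k ≤ n) :
    Nat.card {M // IsColoredOddPartition b n M ∧ j ≤ Multiset.count (k, c) M} =
      coloredhOdd b (n - j * k) := by
  have := Nat.card_congr (addReplicateEquiv hk hc (n - j * k) j)
  rw [Nat.sub_add_cancel hj] at this
  exact this.symm

end AddParts

theorem coloredFOdd_eq_sum_toFinset (b : ℕ → ℕ) (k n : ℕ) :
    coloredFOdd b k n = ∑ M ∈ (finite_setOf_isColoredOddPartition b n).toFinset,
      Multiset.card (M.filter (·.1 = k)) :=
  finsum_mem_eq_finite_toFinset_sum _ _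

theorem coloredFOdd_of_odd (b : ℕ → ℕ) {k : ℕ} (hk : Odd k) (n : ℕ) :
    coloredFOdd b k n = b k * ∑ j ∈ Icc 1 (n / k), coloredhOdd b (n - j * k) := by
  set S := (finite_setOf_isColoredOddPartition b n).toFinset
  have hS : ∀ {M}, M ∈ S ↔ IsColoredOddPartition b n M := by simp [S]
  have hcount (c : ℕ) (hc : c ∈ Icc 1 (b k)) :
      ∑ M ∈ S, Multiset.count (k, c) M = ∑ j ∈ Icc 1 (n / k), coloredhOdd b (n - j * k) := by
    rw [Finset.sum_eq_sum_Icc_card_filter_le S _ fun M hM =>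
      (Nat.le_div_iff_mul_le hk.pos).2 ((hS.1 hM).1.count_mul_le (k, c))]
    refine sum_congr rfl fun j hj => ?_
    have hjk : j * k ≤ n := (Nat.le_div_iff_mul_le hk.pos).1 (Finset.mem_Icc.1 hj).2
    rw [← natCard_isColoredOddPartition_le_count hk hc hjk, ← Nat.card_eq_finsetCard]
    exact Nat.card_congr (Equiv.subtypeEquivRight fun M => by simp [S])
  calc coloredFOdd b k n = ∑ M ∈ S, Multiset.card (M.filter (·.1 = k)) :=
        coloredFOdd_eq_sum_toFinset b k n
    _ = ∑ M ∈ S, ∑ c ∈ Icc 1 (b k), Multiset.count (k, c) M :=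
        sum_congr rfl fun M hM => Multiset.card_filter_fst_eq_sum_count M k _ fun p hp hpk => by
          have := (hS.1 hM).1.1 p hp
          rw [Finset.mem_Icc, ← hpk]
          exact this.2
    _ = ∑ c ∈ Icc 1 (b k), ∑ M ∈ S, Multiset.count (k, c) M := Finset.sum_comm
    _ = b k * ∑ j ∈ Icc 1 (n / k), coloredhOdd b (n - j * k) := by
        rw [sum_congr rfl hcount, sum_const, Nat.card_Icc, smul_eq_mul, Nat.add_sub_cancel]

theorem coloredFOdd_of_even (b : ℕ → ℕ) {k : ℕ} (hk : Even k) (n : ℕ) :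
    coloredFOdd b k n = 0 := by
  rw [coloredFOdd_eq_sum_toFinset]
  refine Finset.sum_eq_zero fun M hM =>
    Multiset.card_eq_zero.2 (Multiset.filter_eq_nil.2 fun p hp hpk => ?_)
  have hodd := (Set.Finite.mem_toFinset _).1 hM |>.2 p hp
  rw [hpk] at hodd
  exact Nat.not_even_iff_odd.2 hodd hk

theorem coloredFOdd_eq_sum_general (b : ℕ) (n k : ℕ) :
    (Odd k → coloredFOdd (fun _ => b) k n
        = b * ∑ j ∈ Finset.Icc 1 (n / k), coloredhOdd (fun _ => b) (n - j * k)) ∧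
    (Even k → coloredFOdd (fun _ => b) k n = 0) :=
  ⟨fun hk => coloredFOdd_of_odd _ hk n, fun hk => coloredFOdd_of_even _ hk n⟩

/-- If `k` is odd then `F°_k(n) = b · Σ_{j=1}^{⌊n/k⌋} h°(n - jk)`; if `k` is even then
`F°_k(n) = 0`. -/
theorem coloredFOdd_eq_sum (b : ℕ) (hb : 0 < b) (n k : ℕ) (hn : 0 < n) (hk : 0 < k) :
    (Odd k → coloredFOdd (fun _ => b) k n
        = b * ∑ j ∈ Finset.Icc 1 (n / k), coloredhOdd (fun _ => b) (n - j * k)) ∧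
    (Even k → coloredFOdd (fun _ => b) k n = 0) :=
  coloredFOdd_eq_sum_general b n k
end

section
/- For all positive integers n and k, the quantity G°_k(n) for b-colored odd partitions satisfies G°_k(n) = b · ( h°(n − k) + h°(n − 3k) + h°(n − 5k) + ⋯ ), i.e. G°_k(n) = b · Σ_{j ≥ 1, (2j−1)k ≤ n} h°(n − (2j−1)k). -/
/-- `G° k n`: the total number of distinct colored parts occurring with multiplicity at
least `k`, summed over all `b`-colored odd partitions of `n`. -/
noncomputable def coloredGOdd (b : ℕ → ℕ) (k n : ℕ) : ℕ :=
  ∑ᶠ M ∈ {M | IsColoredOddPartition b n M},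
    (M.toFinset.filter fun p => k ≤ M.count p).card

open Finset

lemma card_le_weight (M : Multiset (ℕ × ℕ)) (h : ∀ p ∈ M, 0 < p.1) :
    Multiset.card M ≤ (M.map Prod.fst).sum := by
  have h1 : (M.map fun _ => 1).sum ≤ (M.map Prod.fst).sum :=
    Multiset.sum_map_le_sum_map _ _ fun p hp => h p hp
  simpa using h1

lemma setOf_finite (b n : ℕ) :
    {M : Multiset (ℕ × ℕ) | IsColoredOddPartition (fun _ => b) n M}.Finite := by
  apply Set.Finite.subset
    (((n • ((Finset.Icc 1 n ×ˢ Finset.Icc 1 b).val)).powerset.toFinset : Finset _)).finite_toSet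
  intro M hM
  obtain ⟨⟨hmem, hsum⟩, hodd⟩ := hM
  simp only [Finset.coe_sort_coe, Finset.mem_coe, Multiset.mem_toFinset,
    Multiset.mem_powerset]
  rw [Multiset.le_iff_count]
  intro p
  by_cases hp : p ∈ M
  · have h1 : p.1 ∈ Finset.Icc 1 n := by
      have hpos := (hmem p hp).1
      have : p.1 ≤ (M.map Prod.fst).sum :=
        Multiset.single_le_sum (fun x _ => Nat.zero_le x) p.1
          (Multiset.mem_map_of_mem _ hp)
      simp only [Finset.mem_Icc]; omega
    have h2 : p.2 ∈ Finset.Icc 1 b := by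
      have h21 : 1 ≤ p.2 := (hmem p hp).2.1
      have h22 : p.2 ≤ b := (hmem p hp).2.2
      simp only [Finset.mem_Icc]; exact ⟨h21, h22⟩
    have hpT : p ∈ (Finset.Icc 1 n ×ˢ Finset.Icc 1 b).val := by
      rw [Finset.mem_val, Finset.mem_product]; exact ⟨h1, h2⟩
    rw [Multiset.count_nsmul]
    have hc : Multiset.count p M ≤ n := by
      calc Multiset.count p M ≤ Multiset.card M := Multiset.count_le_card p M
        _ ≤ (M.map Prod.fst).sum := card_le_weight M fun q hq => (hmem q hq).1
        _ = n := hsum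
    have h1c : 1 ≤ Multiset.count p (Finset.Icc 1 n ×ˢ Finset.Icc 1 b).val :=
      Multiset.one_le_count_iff_mem.mpr hpT
    calc Multiset.count p M ≤ n := hc
      _ = n * 1 := (mul_one n).symm
      _ ≤ n * Multiset.count p (Finset.Icc 1 n ×ˢ Finset.Icc 1 b).val :=
          Nat.mul_le_mul_left n h1c
  · simp [Multiset.count_eq_zero_of_notMem hp]

lemma hOdd_eq_card (b n : ℕ) :
    coloredhOdd (fun _ => b) n = (setOf_finite b n).toFinset.card := by
  have h : coloredhOdd (fun _ => b) n
      = ({M : Multiset (ℕ × ℕ) | IsColoredOddPartition (fun _ => b) n M}).ncard := by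
    rw [← Nat.card_coe_set_eq]
    rfl
  rw [h, Set.ncard_eq_toFinset_card _ (setOf_finite b n)]

/-- `G°_k(n) = b · (h°(n-k) + h°(n-3k) + h°(n-5k) + ⋯)`, the sum being over all `j ≥ 1`
with `(2j-1)k ≤ n`. -/
theorem coloredGOdd_eq_sum (b : ℕ) (hb : 0 < b) (n k : ℕ) (hn : 0 < n) (hk : 0 < k) :
    coloredGOdd (fun _ => b) k n
      = b * ∑ j ∈ (Finset.Icc 1 n).filter (fun j => (2 * j - 1) * k ≤ n),
          coloredhOdd (fun _ => b) (n - (2 * j - 1) * k) := by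
  classical
  set S : Finset (Multiset (ℕ × ℕ)) := (setOf_finite b n).toFinset with hS
  have hSmem : ∀ M, M ∈ S ↔ IsColoredOddPartition (fun _ => b) n M := by
    intro M; simp [hS, Set.Finite.mem_toFinset, Set.mem_setOf_eq]
  set T : Finset (ℕ × ℕ) :=
    ((Finset.Icc 1 n).filter (fun j => Odd j)) ×ˢ Finset.Icc 1 b with hT
  -- step 1: finsum to finset sum
  have step1 : coloredGOdd (fun _ => b) k n
      = ∑ M ∈ S, (M.toFinset.filter fun p => k ≤ M.count p).card := by
    rw [coloredGOdd]
    rw [show {M | IsColoredOddPartition (fun _ => b) n M} = (S : Set _) by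
      ext M; simp [hSmem]]
    exact finsum_mem_coe_finset _ _
  -- step 2: rewrite inner card as sum over T
  have step2 : ∀ M ∈ S, (M.toFinset.filter fun p => k ≤ M.count p).card
      = ∑ p ∈ T, if k ≤ M.count p then 1 else 0 := by
    intro M hM
    obtain ⟨⟨hmem, hsum⟩, hodd⟩ := (hSmem M).1 hM
    rw [← Finset.sum_filter, Finset.sum_const, smul_eq_mul, mul_one]
    congr 1
    ext p
    simp only [Finset.mem_filter, Multiset.mem_toFinset, hT, Finset.mem_product,
      Finset.mem_Icc]
    constructor
    · rintro ⟨hpM, hcnt⟩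
      have hpM' : p ∈ M := hpM
      have hpos := (hmem p hpM').1
      have hle : p.1 ≤ (M.map Prod.fst).sum :=
        Multiset.single_le_sum (fun x _ => Nat.zero_le x) p.1
          (Multiset.mem_map_of_mem _ hpM')
      have hc1 : 1 ≤ p.2 := (hmem p hpM').2.1
      have hc2 : p.2 ≤ b := (hmem p hpM').2.2
      exact ⟨⟨⟨⟨hpos, by omega⟩, hodd p hpM'⟩, hc1, hc2⟩, hcnt⟩
    · rintro ⟨_, hcnt⟩
      have : 0 < M.count p := lt_of_lt_of_le hk hcnt
      exact ⟨Multiset.count_pos.mp this, hcnt⟩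
  -- step 3: the key bijection
  have step3 : ∀ p ∈ T, (S.filter fun M => k ≤ M.count p).card
      = if p.1 * k ≤ n then coloredhOdd (fun _ => b) (n - p.1 * k) else 0 := by
    intro p hpT
    simp only [hT, Finset.mem_product, Finset.mem_filter, Finset.mem_Icc] at hpT
    obtain ⟨⟨⟨hp1, hp1n⟩, hpodd⟩, hpc⟩ := hpT
    by_cases hcase : p.1 * k ≤ n
    · rw [if_pos hcase, hOdd_eq_card]
      apply Finset.card_bij' (fun M _ => M - Multiset.replicate k p)
        (fun M _ => M + Multiset.replicate k p)
      · -- forward maps into target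
        intro M hM
        rw [Finset.mem_filter] at hM
        obtain ⟨hMS, hcnt⟩ := hM
        obtain ⟨⟨hmem, hsum⟩, hodd⟩ := (hSmem M).1 hMS
        have hrep : Multiset.replicate k p ≤ M :=
          Multiset.le_count_iff_replicate_le.mp hcnt
        have hdecomp : M - Multiset.replicate k p + Multiset.replicate k p = M :=
          tsub_add_cancel_of_le hrep
        rw [Set.Finite.mem_toFinset, Set.mem_setOf_eq]
        refine ⟨⟨fun q hq => hmem q ?_, ?_⟩, fun q hq => hodd q ?_⟩
        · exact Multiset.mem_of_le (tsub_le_self) hq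
        · have := hsum
          conv_lhs at this => rw [← hdecomp]
          rw [Multiset.map_add, Multiset.sum_add, Multiset.map_replicate,
            Multiset.sum_replicate, smul_eq_mul] at this
          have hcomm : k * p.1 = p.1 * k := Nat.mul_comm k p.1
          omega
        · exact Multiset.mem_of_le (tsub_le_self) hq
      · -- backward maps into source
        intro M hM
        rw [Set.Finite.mem_toFinset, Set.mem_setOf_eq] at hM
        obtain ⟨⟨hmem, hsum⟩, hodd⟩ := hM
        rw [Finset.mem_filter]
        constructor
        · rw [hSmem]
          refine ⟨⟨fun q hq => ?_, ?_⟩, fun q hq => ?_⟩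
          · rw [Multiset.mem_add] at hq
            rcases hq with hq | hq
            · exact hmem q hq
            · rw [Multiset.eq_of_mem_replicate hq]
              exact ⟨hp1, hpc⟩
          · rw [Multiset.map_add, Multiset.sum_add, Multiset.map_replicate,
              Multiset.sum_replicate, smul_eq_mul, hsum]
            have hcomm : k * p.1 = p.1 * k := Nat.mul_comm k p.1
            omega
          · rw [Multiset.mem_add] at hq
            rcases hq with hq | hq
            · exact hodd q hq
            · rw [Multiset.eq_of_mem_replicate hq]; exact hpodd
        · rw [Multiset.count_add, Multiset.count_replicate_self]
          omega
      · intro M hM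
        rw [Finset.mem_filter] at hM
        exact tsub_add_cancel_of_le (Multiset.le_count_iff_replicate_le.mp hM.2)
      · intro M hM
        simp
    · rw [if_neg hcase]
      rw [Finset.card_eq_zero, Finset.filter_eq_empty_iff]
      intro M hMS
      rw [hSmem] at hMS
      obtain ⟨⟨hmem, hsum⟩, hodd⟩ := hMS
      intro hcnt
      have hrep : Multiset.replicate k p ≤ M :=
        Multiset.le_count_iff_replicate_le.mp hcnt
      have hdecomp : M - Multiset.replicate k p + Multiset.replicate k p = M :=
        tsub_add_cancel_of_le hrep
      have : (M.map Prod.fst).sum = n := hsum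
      conv_lhs at this => rw [← hdecomp]
      rw [Multiset.map_add, Multiset.sum_add, Multiset.map_replicate,
        Multiset.sum_replicate, smul_eq_mul] at this
      have hcomm : k * p.1 = p.1 * k := Nat.mul_comm k p.1
      omega
  -- assemble
  rw [step1, Finset.sum_congr rfl step2, Finset.sum_comm]
  have step4 : ∀ p ∈ T, (∑ M ∈ S, if k ≤ M.count p then 1 else 0)
      = if p.1 * k ≤ n then coloredhOdd (fun _ => b) (n - p.1 * k) else 0 := by
    intro p hp
    rw [← Finset.sum_filter, Finset.sum_const, smul_eq_mul, mul_one]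
    exact step3 p hp
  rw [Finset.sum_congr rfl step4]
  rw [hT, Finset.sum_product]
  simp only [Finset.sum_const, Nat.card_Icc, add_tsub_cancel_right, smul_eq_mul]
  rw [← Finset.mul_sum]
  congr 1
  rw [← Finset.sum_filter]
  rw [Finset.filter_filter]
  apply Finset.sum_nbij' (fun j => (j + 1) / 2) (fun i => 2 * i - 1)
  · intro a ha
    rw [Finset.mem_filter, Finset.mem_Icc, Nat.odd_iff] at ha
    rw [Finset.mem_filter, Finset.mem_Icc]
    obtain ⟨⟨ha1, han⟩, haodd, hak⟩ := ha
    have he : 2 * ((a + 1) / 2) - 1 = a := by omega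
    rw [he]
    exact ⟨⟨by omega, by omega⟩, hak⟩
  · intro a ha
    rw [Finset.mem_filter, Finset.mem_Icc] at ha
    rw [Finset.mem_filter, Finset.mem_Icc, Nat.odd_iff]
    obtain ⟨⟨ha1, han⟩, hak⟩ := ha
    have h2a : 2 * a - 1 ≤ (2 * a - 1) * k := Nat.le_mul_of_pos_right _ hk
    exact ⟨⟨by omega, by omega⟩, ⟨by omega, hak⟩⟩
  · intro a ha
    rw [Finset.mem_filter, Finset.mem_Icc, Nat.odd_iff] at ha
    omega
  · intro a ha
    rw [Finset.mem_filter, Finset.mem_Icc] at ha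
    omega
  · intro a ha
    rw [Finset.mem_filter, Finset.mem_Icc, Nat.odd_iff] at ha
    have he : 2 * ((a + 1) / 2) - 1 = a := by omega
    rw [he]
end

section
/- For every positive integer n and every odd positive integer k, F°_k(n) = G°_k(n) + G°_k(n − k): the total number of parts with first coordinate k over all b-colored odd partitions of n equals the sum of the number of colored parts repeated at least k times in all b-colored odd partitions of n and of n − k. -/
namespace ColoredAux

open Finset

lemma card_le_weight (M : Multiset (ℕ × ℕ)) (h : ∀ q ∈ M, 0 < q.1) :
    Multiset.card M ≤ (M.map Prod.fst).sum := by
  calc Multiset.card M = (M.map (fun _ => 1)).sum := by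
        simp [Multiset.map_const', Multiset.sum_replicate]
    _ ≤ (M.map Prod.fst).sum :=
        Multiset.sum_map_le_sum_map _ _ (fun q hq => h q hq)

lemma weight_mono {s t : Multiset (ℕ × ℕ)} (h : s ≤ t) :
    (s.map Prod.fst).sum ≤ (t.map Prod.fst).sum := by
  obtain ⟨u, rfl⟩ := Multiset.le_iff_exists_add.mp h
  simp

lemma fst_le_weight {M : Multiset (ℕ × ℕ)} {q : ℕ × ℕ} (hq : q ∈ M) :
    q.1 ≤ (M.map Prod.fst).sum :=
  Multiset.single_le_sum (fun _ _ => Nat.zero_le _) _ (Multiset.mem_map_of_mem _ hq)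

lemma finite_P (b t : ℕ) :
    {M : Multiset (ℕ × ℕ) | IsColoredOddPartition (fun _ => b) t M}.Finite := by
  apply Set.Finite.subset
    (Multiset.toFinset ((t • (Finset.Icc 1 t ×ˢ Finset.Icc 1 b).val).powerset)).finite_toSet
  intro M hM
  obtain ⟨⟨h1, h2⟩, h3⟩ := hM
  simp only [Finset.coe_sort_coe, Finset.mem_coe, Multiset.mem_toFinset, Multiset.mem_powerset]
  rw [Multiset.le_iff_count]
  intro q
  by_cases hq : q ∈ M
  · have hcard : M.count q ≤ t := by
      calc M.count q ≤ Multiset.card M := Multiset.count_le_card q M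
        _ ≤ (M.map Prod.fst).sum := card_le_weight M (fun p hp => (h1 p hp).1)
        _ = t := h2
    have hqs : q ∈ Finset.Icc 1 t ×ˢ Finset.Icc 1 b := by
      have h4 : 0 < q.1 ∧ 1 ≤ q.2 ∧ q.2 ≤ b := h1 q hq
      have hle : q.1 ≤ t := h2 ▸ fst_le_weight hq
      simp only [Finset.mem_product, Finset.mem_Icc]
      omega
    rw [Multiset.count_nsmul,
      Multiset.count_eq_one_of_mem (Finset.Icc 1 t ×ˢ Finset.Icc 1 b).nodup hqs]
    omega
  · simp [Multiset.count_eq_zero_of_notMem hq]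

noncomputable def PF (b t : ℕ) : Finset (Multiset (ℕ × ℕ)) := (finite_P b t).toFinset

lemma mem_PF {b t : ℕ} {M : Multiset (ℕ × ℕ)} :
    M ∈ PF b t ↔ IsColoredOddPartition (fun _ => b) t M := by
  simp [PF, Set.Finite.mem_toFinset]

lemma weight_replicate (m : ℕ) (p : ℕ × ℕ) :
    ((Multiset.replicate m p).map Prod.fst).sum = m * p.1 := by
  simp [Multiset.map_replicate, Multiset.sum_replicate]

/-- The key bijection: partitions of `t` with at least `m` copies of `p` correspond to
partitions of `t - m * p.1`. -/
lemma card_filter_count (b t m : ℕ) (p : ℕ × ℕ) (hp1 : 0 < p.1) (hpodd : Odd p.1)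
    (hpc : 1 ≤ p.2 ∧ p.2 ≤ b) :
    ((PF b t).filter (fun M => m ≤ M.count p)).card
      = if m * p.1 ≤ t then (PF b (t - m * p.1)).card else 0 := by
  split_ifs with hle
  · apply Finset.card_bij' (fun M _ => M - Multiset.replicate m p)
      (fun M _ => M + Multiset.replicate m p)
    · -- forward maps into PF b (t - m * p.1)
      intro M hM
      rw [Finset.mem_filter, mem_PF] at hM
      obtain ⟨⟨⟨h1, h2⟩, h3⟩, hcount⟩ := hM
      have hrep : Multiset.replicate m p ≤ M := Multiset.le_count_iff_replicate_le.mp hcount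
      rw [mem_PF]
      refine ⟨⟨fun q hq => h1 q (Multiset.mem_of_le (tsub_le_self) hq), ?_⟩,
        fun q hq => h3 q (Multiset.mem_of_le (tsub_le_self) hq)⟩
      have hsplit : (M - Multiset.replicate m p) + Multiset.replicate m p = M :=
        tsub_add_cancel_of_le hrep
      have := congrArg (fun N => (Multiset.map Prod.fst N).sum) hsplit
      simp only [Multiset.map_add, Multiset.sum_add, weight_replicate, h2] at this
      omega
    · -- backward maps into the filter
      intro M hM
      rw [mem_PF] at hM
      obtain ⟨⟨h1, h2⟩, h3⟩ := hM
      rw [Finset.mem_filter, mem_PF]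
      refine ⟨⟨⟨fun q hq => ?_, ?_⟩, fun q hq => ?_⟩, ?_⟩
      · rcases Multiset.mem_add.mp hq with h | h
        · exact h1 q h
        · rw [Multiset.eq_of_mem_replicate h]; exact ⟨hp1, hpc⟩
      · simp only [Multiset.map_add, Multiset.sum_add, weight_replicate, h2]
        omega
      · rcases Multiset.mem_add.mp hq with h | h
        · exact h3 q h
        · rw [Multiset.eq_of_mem_replicate h]; exact hpodd
      · rw [Multiset.count_add, Multiset.count_replicate_self]
        omega
    · intro M hM
      rw [Finset.mem_filter] at hM
      exact tsub_add_cancel_of_le (Multiset.le_count_iff_replicate_le.mp hM.2)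
    · intro M hM
      exact add_tsub_cancel_right _ _
  · rw [Finset.card_eq_zero, Finset.filter_eq_empty_iff]
    intro M hM
    rw [mem_PF] at hM
    intro hcount
    have hrep : Multiset.replicate m p ≤ M := Multiset.le_count_iff_replicate_le.mp hcount
    have := weight_mono hrep
    rw [weight_replicate, hM.1.2] at this
    omega

lemma count_eq_sum_ite {c n : ℕ} (h : c ≤ n) :
    c = ∑ m ∈ Finset.Icc 1 n, if m ≤ c then 1 else 0 := by
  simp only [Finset.sum_boole, Nat.cast_id]
  have : (Finset.Icc 1 n).filter (fun m => m ≤ c) = Finset.Icc 1 c := by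
    ext x
    simp only [Finset.mem_filter, Finset.mem_Icc]
    omega
  rw [this, Nat.card_Icc]
  omega


lemma count_le_of_mem_PF {b t : ℕ} {M : Multiset (ℕ × ℕ)} (hM : M ∈ PF b t) (p : ℕ × ℕ) :
    M.count p ≤ t := by
  rw [mem_PF] at hM
  calc M.count p ≤ Multiset.card M := Multiset.count_le_card p M
    _ ≤ (M.map Prod.fst).sum := card_le_weight M (fun q hq => (hM.1.1 q hq).1)
    _ = t := hM.1.2

lemma F_pointwise (b k n : ℕ) {M : Multiset (ℕ × ℕ)} (hM : M ∈ PF b n) :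
    (Multiset.filter (fun p => p.1 = k) M).card
      = ∑ p ∈ ({k} : Finset ℕ) ×ˢ Finset.Icc 1 b, M.count p := by
  classical
  set Sk := ({k} : Finset ℕ) ×ˢ Finset.Icc 1 b with hSk
  set N := Multiset.filter (fun p => p.1 = k) M with hN
  rw [mem_PF] at hM
  have hsub : N.toFinset ⊆ Sk := by
    intro q hq
    rw [Multiset.mem_toFinset, hN, Multiset.mem_filter] at hq
    have h1 : 0 < q.1 ∧ 1 ≤ q.2 ∧ q.2 ≤ b := hM.1.1 q hq.1
    simp only [hSk, Finset.mem_product, Finset.mem_singleton, Finset.mem_Icc]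
    exact ⟨hq.2, h1.2.1, h1.2.2⟩
  rw [← Multiset.toFinset_sum_count_eq N,
    Finset.sum_subset hsub (by
      intro q _ hq'
      rw [Multiset.count_eq_zero]
      simpa [Multiset.mem_toFinset] using hq')]
  refine Finset.sum_congr rfl fun q hq => ?_
  have hq1 : q.1 = k := by
    simp only [hSk, Finset.mem_product, Finset.mem_singleton] at hq
    exact hq.1
  rw [hN, Multiset.count_filter, if_pos hq1]

lemma G_pointwise (b k t : ℕ) (hk : 0 < k) {M : Multiset (ℕ × ℕ)} (hM : M ∈ PF b t) :
    (M.toFinset.filter fun p => k ≤ M.count p).card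
      = ∑ p ∈ ((Finset.Icc 1 t).filter (fun j => Odd j)) ×ˢ Finset.Icc 1 b,
          (if k ≤ M.count p then 1 else 0) := by
  classical
  simp only [Finset.sum_boole, Nat.cast_id]
  congr 1
  rw [mem_PF] at hM
  ext q
  simp only [Finset.mem_filter, Multiset.mem_toFinset, Finset.mem_product, Finset.mem_Icc]
  constructor
  · rintro ⟨hmem, hc⟩
    have h1 : 0 < q.1 ∧ 1 ≤ q.2 ∧ q.2 ≤ b := hM.1.1 q hmem
    have h2 : Odd q.1 := hM.2 q hmem
    have h3 : q.1 ≤ t := hM.1.2 ▸ fst_le_weight hmem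
    exact ⟨⟨⟨⟨h1.1, h3⟩, h2⟩, h1.2.1, h1.2.2⟩, hc⟩
  · rintro ⟨_, hc⟩
    exact ⟨Multiset.count_pos.mp (by omega), hc⟩

lemma G_eq (b k t : ℕ) (hk : 0 < k) :
    coloredGOdd (fun _ => b) k t
      = b * ∑ j ∈ (Finset.Icc 1 t).filter (fun j => Odd j),
          (if k * j ≤ t then (PF b (t - k * j)).card else 0) := by
  classical
  rw [coloredGOdd, finsum_mem_eq_finite_toFinset_sum _ (finite_P b t)]
  calc ∑ M ∈ PF b t, (M.toFinset.filter fun p => k ≤ M.count p).card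
      = ∑ M ∈ PF b t, ∑ p ∈ ((Finset.Icc 1 t).filter (fun j => Odd j)) ×ˢ Finset.Icc 1 b,
          (if k ≤ M.count p then 1 else 0) :=
        Finset.sum_congr rfl fun M hM => G_pointwise b k t hk hM
    _ = ∑ p ∈ ((Finset.Icc 1 t).filter (fun j => Odd j)) ×ˢ Finset.Icc 1 b,
          ∑ M ∈ PF b t, (if k ≤ M.count p then 1 else 0) := Finset.sum_comm
    _ = ∑ p ∈ ((Finset.Icc 1 t).filter (fun j => Odd j)) ×ˢ Finset.Icc 1 b,
          ((PF b t).filter (fun M => k ≤ M.count p)).card := by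
        simp [Finset.sum_boole]
    _ = ∑ p ∈ ((Finset.Icc 1 t).filter (fun j => Odd j)) ×ˢ Finset.Icc 1 b,
          (if k * p.1 ≤ t then (PF b (t - k * p.1)).card else 0) := by
        refine Finset.sum_congr rfl fun p hp => ?_
        simp only [Finset.mem_product, Finset.mem_filter, Finset.mem_Icc] at hp
        exact card_filter_count b t k p (by omega) hp.1.2 ⟨hp.2.1, hp.2.2⟩
    _ = ∑ j ∈ (Finset.Icc 1 t).filter (fun j => Odd j), ∑ c ∈ Finset.Icc 1 b,
          (if k * j ≤ t then (PF b (t - k * j)).card else 0) := by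
        rw [Finset.sum_product]
    _ = b * ∑ j ∈ (Finset.Icc 1 t).filter (fun j => Odd j),
          (if k * j ≤ t then (PF b (t - k * j)).card else 0) := by
        rw [Finset.mul_sum]
        refine Finset.sum_congr rfl fun j _ => ?_
        rw [Finset.sum_const, Nat.card_Icc, smul_eq_mul]
        congr 1

end ColoredAux


/-- For odd `k`, `F°_k(n) = G°_k(n) + G°_k(n - k)`. -/
theorem coloredFOdd_eq_coloredGOdd (b : ℕ) (hb : 0 < b) (n k : ℕ) (hn : 0 < n)
    (hk : 0 < k) (hodd : Odd k) :
    coloredFOdd (fun _ => b) k n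
      = coloredGOdd (fun _ => b) k n + coloredGOdd (fun _ => b) k (n - k) := by
  classical
  open ColoredAux in
  have hF : coloredFOdd (fun _ => b) k n
      = b * ∑ m ∈ Finset.Icc 1 n, (if m * k ≤ n then (PF b (n - m * k)).card else 0) := by
    rw [coloredFOdd, finsum_mem_eq_finite_toFinset_sum _ (finite_P b n)]
    calc ∑ M ∈ PF b n, (Multiset.filter (fun p => p.1 = k) M).card
        = ∑ M ∈ PF b n, ∑ p ∈ ({k} : Finset ℕ) ×ˢ Finset.Icc 1 b, M.count p :=
          Finset.sum_congr rfl fun M hM => F_pointwise b k n hM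
      _ = ∑ p ∈ ({k} : Finset ℕ) ×ˢ Finset.Icc 1 b, ∑ M ∈ PF b n, M.count p :=
          Finset.sum_comm
      _ = ∑ p ∈ ({k} : Finset ℕ) ×ˢ Finset.Icc 1 b, ∑ M ∈ PF b n,
            ∑ m ∈ Finset.Icc 1 n, (if m ≤ M.count p then 1 else 0) := by
          refine Finset.sum_congr rfl fun p _ => Finset.sum_congr rfl fun M hM => ?_
          exact count_eq_sum_ite (count_le_of_mem_PF hM p)
      _ = ∑ p ∈ ({k} : Finset ℕ) ×ˢ Finset.Icc 1 b, ∑ m ∈ Finset.Icc 1 n,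
            ∑ M ∈ PF b n, (if m ≤ M.count p then 1 else 0) :=
          Finset.sum_congr rfl fun p _ => Finset.sum_comm
      _ = ∑ p ∈ ({k} : Finset ℕ) ×ˢ Finset.Icc 1 b, ∑ m ∈ Finset.Icc 1 n,
            ((PF b n).filter (fun M => m ≤ M.count p)).card := by
          simp [Finset.sum_boole]
      _ = ∑ p ∈ ({k} : Finset ℕ) ×ˢ Finset.Icc 1 b, ∑ m ∈ Finset.Icc 1 n,
            (if m * k ≤ n then (PF b (n - m * k)).card else 0) := by
          refine Finset.sum_congr rfl fun p hp => Finset.sum_congr rfl fun m _ => ?_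
          simp only [Finset.mem_product, Finset.mem_singleton, Finset.mem_Icc] at hp
          rw [card_filter_count b n m p (hp.1 ▸ hk) (hp.1 ▸ hodd) ⟨hp.2.1, hp.2.2⟩, hp.1]
      _ = b * ∑ m ∈ Finset.Icc 1 n, (if m * k ≤ n then (PF b (n - m * k)).card else 0) := by
          rw [Finset.sum_const, Finset.card_product, Finset.card_singleton, Nat.card_Icc,
            smul_eq_mul]
          congr 1
          omega
  rw [hF, G_eq b k n hk, G_eq b k (n - k) hk, ← Nat.mul_add]
  congr 1
  rw [← Finset.sum_filter_add_sum_filter_not (Finset.Icc 1 n) (fun m => Odd m)]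
  congr 1
  · exact Finset.sum_congr rfl fun m _ => by rw [mul_comm]
  · rw [← Finset.sum_filter (fun m => m * k ≤ n)
      (fun m => (PF b (n - m * k)).card),
      ← Finset.sum_filter (fun j => k * j ≤ n - k)
      (fun j => (PF b (n - k - k * j)).card)]
    refine Finset.sum_nbij' (fun m => m - 1) (fun j => j + 1) ?_ ?_ ?_ ?_ ?_
    · intro m hm
      simp only [Finset.mem_filter, Finset.mem_Icc, Nat.not_odd_iff_even] at hm ⊢
      obtain ⟨⟨⟨hm1, hmn⟩, hme⟩, hmk⟩ := hm
      have hm2 : 2 ≤ m := by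
        rcases Nat.even_iff.mp hme with h
        omega
      have hpred : k * (m - 1) = k * m - k := by
        rw [← Nat.pred_eq_sub_one, Nat.mul_pred]
      have hkm : m * k = k * m := mul_comm m k
      have hle1 : m - 1 ≤ k * (m - 1) := Nat.le_mul_of_pos_left (m - 1) hk
      refine ⟨⟨⟨by omega, by omega⟩, Nat.Even.sub_odd (by omega) hme odd_one⟩, by omega⟩
    · intro j hj
      simp only [Finset.mem_filter, Finset.mem_Icc, Nat.not_odd_iff_even] at hj ⊢
      obtain ⟨⟨⟨hj1, hjn⟩, hjo⟩, hjk⟩ := hj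
      have h1 : k ≤ k * j := Nat.le_mul_of_pos_right k hj1
      have h2 : (j + 1) * k = k * j + k := by ring
      refine ⟨⟨⟨by omega, by omega⟩, by simpa using hjo.add_one⟩, by omega⟩
    · intro m hm
      simp only [Finset.mem_filter, Finset.mem_Icc] at hm
      omega
    · intro j _
      omega
    · intro m hm
      simp only [Finset.mem_filter, Finset.mem_Icc, Nat.not_odd_iff_even] at hm
      obtain ⟨⟨⟨hm1, hmn⟩, hme⟩, hmk⟩ := hm
      have hpred : k * (m - 1) = k * m - k := by
        rw [← Nat.pred_eq_sub_one, Nat.mul_pred]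
      have hkm : m * k = k * m := mul_comm m k
      have hle : k ≤ k * m := Nat.le_mul_of_pos_right k (by omega)
      congr 2
      omega
end

section
/- For all positive integers n and k, the frequency of k in b-colored distinct partitions satisfies F^d_k(n) = b · Σ_{j=1}^{⌊n/k⌋} (−1)^{j−1} h^d(n − jk). -/
/-- A colored partition in which every colored part occurs at most once. -/
def IsColoredDistinctPartition (b : ℕ → ℕ) (n : ℕ) (M : Multiset (ℕ × ℕ)) : Prop :=
  IsColoredPartition b n M ∧ M.Nodup

/-- `h^d n`: the number of `b`-colored partitions of `n` with all colored parts distinct. -/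
noncomputable def coloredhDist (b : ℕ → ℕ) (n : ℕ) : ℕ :=
  Nat.card {M // IsColoredDistinctPartition b n M}

/-- `F^d k n`: the total number of parts with first coordinate `k` over all `b`-colored
distinct partitions of `n`. -/
noncomputable def coloredFDist (b : ℕ → ℕ) (k n : ℕ) : ℕ :=
  ∑ᶠ M ∈ {M | IsColoredDistinctPartition b n M}, (Multiset.filter (fun p => p.1 = k) M).card

/-! ### Auxiliary machinery -/

namespace ColoredAux

lemma finite_cdp (b n : ℕ) :
    {M | IsColoredDistinctPartition (fun _ => b) n M}.Finite := by
  apply Set.Finite.subset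
    (((Finset.Icc 1 n ×ˢ Finset.Icc 1 b).powerset.image Finset.val).finite_toSet)
  rintro M ⟨⟨h1, h2⟩, hnd⟩
  simp only [Finset.coe_image, Set.mem_image, Finset.mem_coe, Finset.mem_powerset]
  refine ⟨⟨M, hnd⟩, ?_, rfl⟩
  intro p hp
  have hpM : p ∈ M := hp
  obtain ⟨hp1, hp2, hp3⟩ := h1 p hpM
  have hle : p.1 ≤ (M.map Prod.fst).sum :=
    Multiset.single_le_sum (fun x _ => Nat.zero_le x) _ (Multiset.mem_map_of_mem _ hpM)
  rw [h2] at hle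
  simp only [Finset.mem_product, Finset.mem_Icc]
  exact ⟨⟨hp1, hle⟩, hp2, hp3⟩

/-- The finset of `b`-colored distinct partitions of `n`. -/
noncomputable def cdp (b n : ℕ) : Finset (Multiset (ℕ × ℕ)) :=
  (finite_cdp b n).toFinset

lemma mem_cdp {b n : ℕ} {M : Multiset (ℕ × ℕ)} :
    M ∈ cdp b n ↔ IsColoredDistinctPartition (fun _ => b) n M := by
  simp [cdp, Set.Finite.mem_toFinset]

lemma coloredhDist_eq (b n : ℕ) : coloredhDist (fun _ => b) n = (cdp b n).card := by
  rw [coloredhDist, cdp]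
  exact Nat.card_eq_card_finite_toFinset (finite_cdp b n)

lemma coloredFDist_eq (b k n : ℕ) :
    coloredFDist (fun _ => b) k n
      = ∑ M ∈ cdp b n, (Multiset.filter (fun p => p.1 = k) M).card := by
  rw [coloredFDist, ← (finite_cdp b n).coe_toFinset, finsum_mem_coe_finset]
  rfl

/-- `a b k c n` : the number of distinct partitions of `n` containing the colored part
`(k, c)`. -/
noncomputable def a (b k c n : ℕ) : ℕ :=
  ((cdp b n).filter (fun M => (k, c) ∈ M)).card

lemma a_eq_zero (b k c n : ℕ) (h : n < k) : a b k c n = 0 := by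
  rw [a, Finset.card_eq_zero, Finset.filter_eq_empty_iff]
  intro M hM hmem
  obtain ⟨⟨h1, h2⟩, hnd⟩ := mem_cdp.mp hM
  have hle : k ≤ (M.map Prod.fst).sum :=
    Multiset.single_le_sum (fun x _ => Nat.zero_le x) _
      (Multiset.mem_map_of_mem _ hmem)
  omega

/-- The key bijection: partitions of `n` containing `(k,c)` are in bijection with
partitions of `n - k` not containing `(k,c)`. -/
lemma a_card_bij (b k c n : ℕ) (hc1 : 1 ≤ c) (hcb : c ≤ b) (hk : 0 < k) (hkn : k ≤ n) :
    a b k c n = ((cdp b (n - k)).filter (fun M => (k, c) ∉ M)).card := by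
  rw [a]
  apply Finset.card_bij' (fun M _ => M.erase (k, c)) (fun M _ => (k, c) ::ₘ M)
  · -- hi : erase maps into target
    intro M hM
    rw [Finset.mem_filter] at hM ⊢
    obtain ⟨hM, hmem⟩ := hM
    obtain ⟨⟨h1, h2⟩, hnd⟩ := mem_cdp.mp hM
    have hM' : M = (k, c) ::ₘ M.erase (k, c) := (Multiset.cons_erase hmem).symm
    constructor
    · rw [mem_cdp]
      refine ⟨⟨fun p hp => h1 p (Multiset.mem_of_mem_erase hp), ?_⟩, hnd.erase _⟩
      have : (M.map Prod.fst).sum = k + ((M.erase (k, c)).map Prod.fst).sum := by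
        conv_lhs => rw [hM']
        simp
      omega
    · exact hnd.notMem_erase
  · -- hj : cons maps into source
    intro M hM
    rw [Finset.mem_filter] at hM ⊢
    obtain ⟨hM, hmem⟩ := hM
    obtain ⟨⟨h1, h2⟩, hnd⟩ := mem_cdp.mp hM
    constructor
    · rw [mem_cdp]
      refine ⟨⟨?_, ?_⟩, ?_⟩
      · intro p hp
        rcases Multiset.mem_cons.mp hp with h | h
        · subst h; exact ⟨hk, hc1, hcb⟩
        · exact h1 p h
      · simp [h2]; omega
      · exact Multiset.nodup_cons.mpr ⟨hmem, hnd⟩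
    · exact Multiset.mem_cons_self _ _
  · intro M hM
    rw [Finset.mem_filter] at hM
    exact Multiset.cons_erase hM.2
  · intro M _
    exact Multiset.erase_cons_head _ _

lemma a_recurrence (b k c n : ℕ) (hc1 : 1 ≤ c) (hcb : c ≤ b) (hk : 0 < k) (hkn : k ≤ n) :
    a b k c n + a b k c (n - k) = coloredhDist (fun _ => b) (n - k) := by
  rw [a_card_bij b k c n hc1 hcb hk hkn, coloredhDist_eq, a]
  rw [add_comm]
  classical
  exact Finset.card_filter_add_card_filter_not (fun M => (k, c) ∈ M)

/-- The alternating-sum formula for `a`. -/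
lemma a_formula (b k c : ℕ) (hc1 : 1 ≤ c) (hcb : c ≤ b) (hk : 0 < k) :
    ∀ n, (a b k c n : ℤ)
      = ∑ j ∈ Finset.Icc 1 (n / k),
          (-1 : ℤ) ^ (j - 1) * (coloredhDist (fun _ => b) (n - j * k) : ℤ) := by
  intro n
  induction n using Nat.strong_induction_on with
  | _ n ih =>
    rcases lt_or_ge n k with h | h
    · rw [Nat.div_eq_of_lt h]
      simp [a_eq_zero b k c n h]
    · have hrec := a_recurrence b k c n hc1 hcb hk h
      have hih := ih (n - k) (by omega)
      have hdiv : n / k = (n - k) / k + 1 := by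
        conv_lhs => rw [show n = (n - k) + k from by omega]
        rw [Nat.add_div_right _ hk]
      -- rewrite both sums over ranges
      have hsum : ∀ m (f : ℕ → ℤ), ∑ j ∈ Finset.Icc 1 m, f j
          = ∑ i ∈ Finset.range m, f (i + 1) := by
        intro m f
        rw [← Finset.Ico_add_one_right_eq_Icc, Finset.sum_Ico_eq_sum_range]
        simp [add_comm]
      rw [hdiv, hsum]
      rw [hsum] at hih
      rw [Finset.sum_range_succ']
      have hterm : ∀ i, (-1 : ℤ) ^ (i + 1 + 1 - 1)
            * (coloredhDist (fun _ => b) (n - (i + 1 + 1) * k) : ℤ)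
          = -((-1 : ℤ) ^ (i + 1 - 1)
            * (coloredhDist (fun _ => b) (n - k - (i + 1) * k) : ℤ)) := by
        intro i
        have h1 : n - (i + 1 + 1) * k = n - k - (i + 1) * k := by ring_nf; omega
        have h2 : (-1 : ℤ) ^ (i + 1 + 1 - 1) = -(-1 : ℤ) ^ (i + 1 - 1) := by
          simp [pow_succ]
        rw [h1, h2]; ring
      rw [Finset.sum_congr rfl (fun i _ => hterm i), Finset.sum_neg_distrib]
      simp only [Nat.add_sub_cancel, pow_zero, one_mul, Nat.one_mul, zero_add, Nat.sub_self] at hih ⊢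
      have : (a b k c n : ℤ) + (a b k c (n - k) : ℤ)
          = (coloredhDist (fun _ => b) (n - k) : ℤ) := by exact_mod_cast hrec
      linarith

/-- For a nodup partition, the number of parts equal to `k` is the number of colors `c`
with `(k, c) ∈ M`. -/
lemma filter_card_eq (b k : ℕ) {n : ℕ} {M : Multiset (ℕ × ℕ)} (hM : M ∈ cdp b n) :
    (Multiset.filter (fun p => p.1 = k) M).card
      = ∑ c ∈ Finset.Icc 1 b, (if (k, c) ∈ M then 1 else 0) := by
  obtain ⟨⟨h1, h2⟩, hnd⟩ := mem_cdp.mp hM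
  classical
  let F : Finset (ℕ × ℕ) := ⟨M, hnd⟩
  have hmemF : ∀ p, p ∈ F ↔ p ∈ M := fun p => Iff.rfl
  have himg : F.filter (fun p => p.1 = k)
      = ((Finset.Icc 1 b).filter (fun c => (k, c) ∈ M)).image (fun c => (k, c)) := by
    ext p
    simp only [Finset.mem_filter, Finset.mem_image, Finset.mem_Icc, hmemF]
    constructor
    · rintro ⟨hpM, hpk⟩
      obtain ⟨h1', h2', h3'⟩ := h1 p hpM
      exact ⟨p.2, ⟨⟨h2', h3'⟩, by rwa [← hpk, Prod.mk.eta]⟩, by rw [← hpk, Prod.mk.eta]⟩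
    · rintro ⟨c, ⟨_, hcM⟩, rfl⟩
      exact ⟨hcM, rfl⟩
  have hcard : (Multiset.filter (fun p => p.1 = k) M).card
      = (F.filter (fun p => p.1 = k)).card := rfl
  rw [hcard, himg, Finset.card_image_of_injective _ (fun a b h => by
    simpa using congrArg Prod.snd h)]
  rw [Finset.card_filter]

theorem coloredFDist_eq_sum' (b : ℕ) (n k : ℕ) (hk : 0 < k) :
    (coloredFDist (fun _ => b) k n : ℤ)
      = b * ∑ j ∈ Finset.Icc 1 (n / k),
          (-1 : ℤ) ^ (j - 1) * (coloredhDist (fun _ => b) (n - j * k) : ℤ) := by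
  rw [coloredFDist_eq]
  push_cast
  have : ∀ M ∈ cdp b n, ((Multiset.filter (fun p => p.1 = k) M).card : ℤ)
      = ∑ c ∈ Finset.Icc 1 b, (if (k, c) ∈ M then (1 : ℤ) else 0) := by
    intro M hM
    rw [filter_card_eq b k hM]
    push_cast
    rfl
  rw [Finset.sum_congr rfl this, Finset.sum_comm]
  have hc : ∀ c ∈ Finset.Icc 1 b,
      ∑ M ∈ cdp b n, (if (k, c) ∈ M then (1 : ℤ) else 0)
        = ∑ j ∈ Finset.Icc 1 (n / k),
            (-1 : ℤ) ^ (j - 1) * (coloredhDist (fun _ => b) (n - j * k) : ℤ) := by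
    intro c hc
    rw [Finset.mem_Icc] at hc
    rw [← a_formula b k c hc.1 hc.2 hk n]
    rw [a, Finset.card_filter]
    push_cast
    rfl
  rw [Finset.sum_congr rfl hc, Finset.sum_const, Nat.card_Icc]
  simp [mul_comm]

end ColoredAux

/-- `F^d_k(n) = b · Σ_{j=1}^{⌊n/k⌋} (-1)^{j-1} h^d(n - jk)`. -/
theorem coloredFDist_eq_sum (b : ℕ) (hb : 0 < b) (n k : ℕ) (hn : 0 < n) (hk : 0 < k) :
    (coloredFDist (fun _ => b) k n : ℤ)
      = b * ∑ j ∈ Finset.Icc 1 (n / k),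
          (-1 : ℤ) ^ (j - 1) * (coloredhDist (fun _ => b) (n - j * k) : ℤ) := by
  exact ColoredAux.coloredFDist_eq_sum' b n k hk
end
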